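/- For the function f(M) = ½‖M‖_F² + χ_{rank(M) ≤ r}(M), its Fenchel conjugate is f*(Y) = ½ Σ_{i=1}^r σᵢ(Y)² = ½‖Y‖_{F,r}². -/

import Mathlib

open Matrix BigOperators Finset

/-- Singular values of a real `n × m` matrix, in nonincreasing order, 0-indexed:
`sv M 0 ≥ sv M 1 ≥ …` are the singular values (square roots of the eigenvalues of `Mᵀ M`). -/
noncomputable def sv {n m : ℕ} (M : Matrix (Fin n) (Fin m) ℝ) (i : ℕ) : ℝ :=
  (((List.ofFn fun j : Fin m =>
      Real.sqrt ((Matrix.isHermitian_conjTranspose_mul_self M).eigenvalues j)).mergeSort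
      (fun a b => decide (a ≥ b))).getD i 0)

/-- Trace inner product `⟨M, Y⟩ = tr (Mᵀ Y)`. -/
def ip {n m : ℕ} (M Y : Matrix (Fin n) (Fin m) ℝ) : ℝ := ∑ i, ∑ j, M i j * Y i j

/-- Frobenius norm. -/
noncomputable def fro {n m : ℕ} (M : Matrix (Fin n) (Fin m) ℝ) : ℝ :=
  Real.sqrt (∑ i, ∑ j, M i j ^ 2)

/-- Truncated Frobenius norm `‖M‖_{F,r} = sqrt (σ₁² + ⋯ + σᵣ²)`. -/
noncomputable def truncFro {n m : ℕ} (r : ℕ) (M : Matrix (Fin n) (Fin m) ℝ) : ℝ :=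
  Real.sqrt (∑ i ∈ Finset.range r, sv M i ^ 2)

/-- Dual norm with respect to the trace inner product. -/
noncomputable def dualNorm {n m : ℕ} (ν : Matrix (Fin n) (Fin m) ℝ → ℝ)
    (M : Matrix (Fin n) (Fin m) ℝ) : ℝ :=
  sSup {c : ℝ | ∃ Y, ν Y ≤ 1 ∧ c = ip M Y}

/-- Low-rank inducing Frobenius norm `‖·‖_{F,r*}`, the dual of `‖·‖_{F,r}`. -/
noncomputable def lowRankFro {n m : ℕ} (r : ℕ) (M : Matrix (Fin n) (Fin m) ℝ) : ℝ :=
  dualNorm (truncFro r) M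

/-- Ky Fan `r`-norm: sum of the `r` largest singular values. -/
noncomputable def kyFan {n m : ℕ} (r : ℕ) (M : Matrix (Fin n) (Fin m) ℝ) : ℝ :=
  ∑ i ∈ Finset.range r, sv M i

/-- Nuclear norm: sum of all singular values. -/
noncomputable def nuclear {n m : ℕ} (M : Matrix (Fin n) (Fin m) ℝ) : ℝ :=
  ∑ i ∈ Finset.range (min n m), sv M i

/-- Fenchel conjugate (with trace inner product) of an extended-real-valued function. -/
noncomputable def fconj {n m : ℕ} (f : Matrix (Fin n) (Fin m) ℝ → EReal)
    (Y : Matrix (Fin n) (Fin m) ℝ) : EReal :=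
  ⨆ M, ((ip M Y : ℝ) : EReal) - f M

/-- `f(M) = ½‖M‖_F² + χ_{rank M ≤ r}(M)`. -/
noncomputable def fRank {n m : ℕ} (r : ℕ) (M : Matrix (Fin n) (Fin m) ℝ) : EReal :=
  if M.rank ≤ r then ((2⁻¹ * fro M ^ 2 : ℝ) : EReal) else ⊤

/-! For `rank M ≤ r` let `P` be the orthogonal projection onto the row space of `M`, so that
`M = M P` and `tr P = rank M ≤ r`. Completing the square,
`⟨M, Y⟩ - ½‖M‖² = ⟨M, Y P⟩ - ½‖M‖² ≤ ½‖Y P‖² = ½ tr (P YᵀY)`,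
and in an eigenbasis of `YᵀY` the right-hand side is `½ Σⱼ tⱼ λⱼ`, where the weights `tⱼ` are
the diagonal entries of a projection, hence lie in `[0, 1]`, and sum to `tr P ≤ r`. Such a
weighted sum is at most the sum of the `r` largest eigenvalues `λⱼ = σⱼ(Y)²`, and equality is
attained at `M = Y P` with `P` the projection onto the top `r` eigenvectors. -/

section Frobenius

variable {n m : ℕ}

lemma ip_eq_trace (M Y : Matrix (Fin n) (Fin m) ℝ) : ip M Y = trace (Mᵀ * Y) := by
  simp only [ip, trace, Matrix.diag, mul_apply, transpose_apply]
  exact Finset.sum_comm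

lemma fro_sq (M : Matrix (Fin n) (Fin m) ℝ) : fro M ^ 2 = ip M M := by
  rw [fro, Real.sq_sqrt (by positivity)]
  simp only [ip, sq]

lemma ip_mul_right (M Y : Matrix (Fin n) (Fin m) ℝ) (P : Matrix (Fin m) (Fin m) ℝ) :
    ip M (Y * P) = ip (M * Pᵀ) Y := by
  rw [ip_eq_trace, ip_eq_trace, transpose_mul, transpose_transpose, ← Matrix.mul_assoc,
    trace_mul_cycle]

lemma ip_sub_half_fro_sq_le (M Y : Matrix (Fin n) (Fin m) ℝ) :
    ip M Y - 2⁻¹ * fro M ^ 2 ≤ 2⁻¹ * fro Y ^ 2 := by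
  rw [fro_sq, fro_sq, ip, ip, ip, ← sub_nonneg]
  have h : ∀ i j, 0 ≤ 2⁻¹ * (Y i j * Y i j) - (M i j * Y i j - 2⁻¹ * (M i j * M i j)) :=
    fun i j => by nlinarith [sq_nonneg (M i j - Y i j)]
  simpa only [Finset.mul_sum, Finset.sum_sub_distrib] using
    Finset.sum_nonneg fun i _ => Finset.sum_nonneg fun j _ => h i j

variable {P : Matrix (Fin m) (Fin m) ℝ}

lemma ip_mul_self_right (hP : P.IsSymm) (Y : Matrix (Fin n) (Fin m) ℝ) :
    ip (Y * P) Y = trace (P * (Yᵀ * Y)) := by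
  rw [ip_eq_trace, transpose_mul, hP.eq, Matrix.mul_assoc]

lemma fro_mul_sq (hP : P.IsSymm) (hPP : IsIdempotentElem P) (Y : Matrix (Fin n) (Fin m) ℝ) :
    fro (Y * P) ^ 2 = trace (P * (Yᵀ * Y)) := by
  rw [fro_sq, ← ip_mul_self_right hP, ip_mul_right, hP.eq, Matrix.mul_assoc, hPP.eq]

lemma ip_sub_half_fro_sq_le_trace (hP : P.IsSymm) (hPP : IsIdempotentElem P)
    {M : Matrix (Fin n) (Fin m) ℝ} (hMP : M * P = M) (Y : Matrix (Fin n) (Fin m) ℝ) :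
    ip M Y - 2⁻¹ * fro M ^ 2 ≤ 2⁻¹ * trace (P * (Yᵀ * Y)) := by
  have hY : ip M Y = ip M (Y * P) := by rw [ip_mul_right, hP.eq, hMP]
  rw [hY, ← fro_mul_sq hP hPP]
  exact ip_sub_half_fro_sq_le M (Y * P)

end Frobenius

section Projection

variable {ι : Type*} [Fintype ι]

lemma diag_mem_Icc_of_isSymm_of_isIdempotentElem {P : Matrix ι ι ℝ} (hP : P.IsSymm)
    (hPP : IsIdempotentElem P) (j : ι) : P j j ∈ Set.Icc 0 1 := by
  have hsq : P j j = ∑ k, P j k ^ 2 := by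
    conv_lhs => rw [← hPP.eq]
    simp only [mul_apply, sq, hP.apply]
  have hge : P j j ^ 2 ≤ P j j := hsq ▸ Finset.single_le_sum (fun k _ => sq_nonneg (P j k))
    (Finset.mem_univ j)
  have h0 : 0 ≤ P j j := hsq ▸ Finset.sum_nonneg fun k _ => sq_nonneg _
  exact ⟨h0, by nlinarith⟩

variable [DecidableEq ι]

/-- For orthogonal `U`, the orthogonal projection onto the span of the columns `U j`, `j ∈ s`. -/
noncomputable def orthProj (U : Matrix ι ι ℝ) (s : Finset ι) : Matrix ι ι ℝ :=
  U * diagonal (fun j => if j ∈ s then 1 else 0) * Uᵀ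

lemma orthProj_isSymm (U : Matrix ι ι ℝ) (s : Finset ι) : (orthProj U s).IsSymm := by
  simp [orthProj, IsSymm, transpose_mul, Matrix.mul_assoc]

variable {U : Matrix ι ι ℝ}

lemma transpose_mul_orthProj_mul (hU : Uᵀ * U = 1) (s : Finset ι) :
    Uᵀ * orthProj U s * U = diagonal (fun j => if j ∈ s then 1 else 0) := by
  simp only [orthProj, ← Matrix.mul_assoc, hU, Matrix.one_mul]
  rw [Matrix.mul_assoc, hU, Matrix.mul_one]

lemma isIdempotentElem_orthProj (hU : Uᵀ * U = 1) (s : Finset ι) :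
    IsIdempotentElem (orthProj U s) := by
  have hD : IsIdempotentElem (diagonal (fun j : ι => if j ∈ s then (1 : ℝ) else 0)) := by
    simp [IsIdempotentElem, diagonal_mul_diagonal]
  set D := diagonal (fun j : ι => if j ∈ s then (1 : ℝ) else 0)
  calc U * D * Uᵀ * (U * D * Uᵀ) = U * (D * (Uᵀ * U) * D) * Uᵀ := by simp only [Matrix.mul_assoc]
    _ = U * D * Uᵀ := by rw [hU, Matrix.mul_one, hD.eq, Matrix.mul_assoc]

lemma trace_orthProj (hU : Uᵀ * U = 1) (s : Finset ι) : trace (orthProj U s) = #s := by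
  rw [orthProj, trace_mul_cycle, hU, Matrix.one_mul, trace_diagonal, Finset.sum_boole]
  simp

lemma rank_orthProj_le (U : Matrix ι ι ℝ) (s : Finset ι) : (orthProj U s).rank ≤ #s := by
  calc (orthProj U s).rank ≤ (diagonal (fun j : ι => if j ∈ s then (1 : ℝ) else 0)).rank :=
        (rank_mul_le_left _ _).trans (rank_mul_le_right _ _)
    _ = #s := by
      rw [rank_diagonal, ← Fintype.card_coe]
      exact Fintype.card_congr (Equiv.subtypeEquivRight fun j => by simp)

end Projection

section Spectral

variable {ι : Type*} [Fintype ι] [DecidableEq ι] {A : Matrix ι ι ℝ}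

lemma Matrix.IsHermitian.transpose_eigenvectorUnitary_mul_self (hA : A.IsHermitian) :
    (hA.eigenvectorUnitary : Matrix ι ι ℝ)ᵀ * hA.eigenvectorUnitary = 1 := by
  simpa [star_eq_conjTranspose] using mem_unitaryGroup_iff'.mp hA.eigenvectorUnitary.2

lemma Matrix.IsHermitian.eq_eigenvectorUnitary_mul_diagonal_mul_transpose (hA : A.IsHermitian) :
    A = hA.eigenvectorUnitary * diagonal hA.eigenvalues *
      (hA.eigenvectorUnitary : Matrix ι ι ℝ)ᵀ := by
  conv_lhs => rw [hA.spectral_theorem]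
  simp [Unitary.conjStarAlgAut_apply, star_eq_conjTranspose]

lemma Matrix.IsHermitian.transpose_eigenvectorUnitary_mul_mul (hA : A.IsHermitian) :
    (hA.eigenvectorUnitary : Matrix ι ι ℝ)ᵀ * A * hA.eigenvectorUnitary =
      diagonal hA.eigenvalues := by
  have h := congrArg (fun X => (hA.eigenvectorUnitary : Matrix ι ι ℝ)ᵀ * X * hA.eigenvectorUnitary)
    hA.eq_eigenvectorUnitary_mul_diagonal_mul_transpose
  rw [h]
  simp only [← Matrix.mul_assoc, hA.transpose_eigenvectorUnitary_mul_self, Matrix.one_mul]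
  rw [Matrix.mul_assoc, hA.transpose_eigenvectorUnitary_mul_self, Matrix.mul_one]

lemma Matrix.IsHermitian.trace_mul_eq_sum_diag_mul_eigenvalues (hA : A.IsHermitian)
    (P : Matrix ι ι ℝ) :
    trace (P * A) = ∑ j, ((hA.eigenvectorUnitary : Matrix ι ι ℝ)ᵀ * P * hA.eigenvectorUnitary) j j
      * hA.eigenvalues j := by
  conv_lhs => rw [hA.eq_eigenvectorUnitary_mul_diagonal_mul_transpose, ← Matrix.mul_assoc,
    ← Matrix.mul_assoc, trace_mul_cycle, ← Matrix.mul_assoc]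
  simp [trace, mul_diagonal]

end Spectral

lemma mul_diagonal_support_eq_self {κ ι : Type*} [Fintype κ] [Fintype ι] [DecidableEq ι]
    {N : Matrix κ ι ℝ} {d : ι → ℝ} (hN : Nᵀ * N = diagonal d) :
    N * diagonal (fun j => if j ∈ ({j | d j ≠ 0} : Finset ι) then (1 : ℝ) else 0) = N := by
  ext i j
  by_cases hj : d j = 0
  · have hcol : ∑ k, N k j ^ 2 = 0 := by
      simpa [mul_apply, sq, hj] using congr_fun₂ hN j j
    have := (Finset.sum_eq_zero_iff_of_nonneg fun k _ => sq_nonneg (N k j)).mp hcol i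
      (Finset.mem_univ i)
    simp [mul_diagonal, hj, pow_eq_zero_iff two_ne_zero |>.mp this]
  · simp [mul_diagonal, hj]

lemma exists_isSymm_isIdempotentElem_mul_eq_self {κ ι : Type*} [Fintype κ] [Fintype ι]
    [DecidableEq ι] (M : Matrix κ ι ℝ) :
    ∃ P : Matrix ι ι ℝ, P.IsSymm ∧ IsIdempotentElem P ∧ M * P = M ∧ trace P = M.rank := by
  -- `P` projects onto the eigenvectors of `MᵀM` with nonzero eigenvalue, which span the row
  -- space of `M`; the other eigenvectors `v` have `‖M v‖² = vᵀMᵀM v = 0`.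
  set hB := isHermitian_conjTranspose_mul_self M
  set V : Matrix ι ι ℝ := (hB.eigenvectorUnitary : Matrix ι ι ℝ)
  have hV : Vᵀ * V = 1 := hB.transpose_eigenvectorUnitary_mul_self
  set s : Finset ι := {j | hB.eigenvalues j ≠ 0}
  refine ⟨orthProj V s, orthProj_isSymm V s, isIdempotentElem_orthProj hV s, ?_, ?_⟩
  · have hMV : (M * V)ᵀ * (M * V) = diagonal hB.eigenvalues := by
      calc (M * V)ᵀ * (M * V) = Vᵀ * (Mᴴ * M) * V := by
            rw [conjTranspose_eq_transpose_of_trivial]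
            simp only [transpose_mul, Matrix.mul_assoc]
        _ = diagonal hB.eigenvalues := hB.transpose_eigenvectorUnitary_mul_mul
    rw [orthProj, ← Matrix.mul_assoc, ← Matrix.mul_assoc, mul_diagonal_support_eq_self hMV,
      Matrix.mul_assoc, mul_eq_one_comm.mp hV, Matrix.mul_one]
  · rw [trace_orthProj hV, ← rank_conjTranspose_mul_self M, hB.rank_eq_card_non_zero_eigs,
      Fintype.card_subtype]

lemma sum_mul_le_sum_of_threshold {ι : Type*} [Fintype ι] {f t : ι → ℝ} {s : Finset ι} {c : ℝ}
    (hc : 0 ≤ c) (hs : ∀ j ∈ s, c ≤ f j) (hsc : ∀ j ∉ s, f j ≤ c)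
    (ht : ∀ j, t j ∈ Set.Icc 0 1) (hts : ∑ j, t j ≤ #s) :
    ∑ j, t j * f j ≤ ∑ j ∈ s, f j := by
  classical
  have hin : ∀ j ∈ s, t j * f j - f j ≤ (t j - 1) * c := fun j hj => by
    nlinarith [hs j hj, (ht j).2]
  have hout : ∀ j ∈ sᶜ, t j * f j ≤ t j * c := fun j hj => by
    nlinarith [hsc j (Finset.mem_compl.mp hj), (ht j).1]
  have hsum : ∑ j, t j * f j - ∑ j ∈ s, f j ≤ (∑ j, t j - #s) * c := by
    calc ∑ j, t j * f j - ∑ j ∈ s, f j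
        = ∑ j ∈ s, (t j * f j - f j) + ∑ j ∈ sᶜ, t j * f j := by
          rw [Finset.sum_sub_distrib, ← Finset.sum_add_sum_compl s (fun j => t j * f j)]; ring
      _ ≤ ∑ j ∈ s, (t j - 1) * c + ∑ j ∈ sᶜ, t j * c :=
          add_le_add (Finset.sum_le_sum hin) (Finset.sum_le_sum hout)
      _ = (∑ j, t j - #s) * c := by
          rw [← Finset.sum_add_sum_compl s t]
          simp only [← Finset.sum_mul, Finset.sum_sub_distrib, Finset.sum_const, nsmul_eq_mul,
            mul_one]
          ring
  nlinarith [mul_nonpos_of_nonpos_of_nonneg (sub_nonpos.mpr hts) hc]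

lemma Matrix.IsHermitian.trace_mul_le_sum_eigenvalues {ι : Type*} [Fintype ι] [DecidableEq ι]
    {A : Matrix ι ι ℝ} (hA : A.IsHermitian) {s : Finset ι} {c : ℝ} (hc : 0 ≤ c)
    (hs : ∀ j ∈ s, c ≤ hA.eigenvalues j) (hsc : ∀ j ∉ s, hA.eigenvalues j ≤ c)
    {P : Matrix ι ι ℝ} (hP : P.IsSymm) (hPP : IsIdempotentElem P) (hPs : trace P ≤ #s) :
    trace (P * A) ≤ ∑ j ∈ s, hA.eigenvalues j := by
  set U : Matrix ι ι ℝ := (hA.eigenvectorUnitary : Matrix ι ι ℝ)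
  have hU : Uᵀ * U = 1 := hA.transpose_eigenvectorUnitary_mul_self
  have hQ : (Uᵀ * P * U).IsSymm := by
    simp only [IsSymm, transpose_mul, transpose_transpose, hP.eq, Matrix.mul_assoc]
  have hQQ : IsIdempotentElem (Uᵀ * P * U) := by
    calc Uᵀ * P * U * (Uᵀ * P * U) = Uᵀ * (P * (U * Uᵀ) * P) * U := by
          simp only [Matrix.mul_assoc]
      _ = Uᵀ * P * U := by rw [mul_eq_one_comm.mp hU, Matrix.mul_one, hPP.eq, Matrix.mul_assoc]
  have htrace : ∑ j, (Uᵀ * P * U) j j = trace P := by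
    change trace (Uᵀ * P * U) = trace P
    rw [trace_mul_cycle, mul_eq_one_comm.mp hU, Matrix.one_mul]
  rw [hA.trace_mul_eq_sum_diag_mul_eigenvalues]
  exact sum_mul_le_sum_of_threshold hc hs hsc
    (diag_mem_Icc_of_isSymm_of_isIdempotentElem hQ hQQ) (htrace ▸ hPs)

lemma exists_perm_antitone_mergeSort {m : ℕ} (g : Fin m → ℝ) :
    ∃ σ : Equiv.Perm (Fin m), Antitone (g ∘ σ) ∧
      ∀ i : Fin m, ((List.ofFn g).mergeSort (fun a b => decide (a ≥ b))).getD i 0 = g (σ i) := by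
  set σ : Equiv.Perm (Fin m) := Fin.revPerm.trans (Tuple.sort g)
  have hanti : Antitone (g ∘ σ) := fun a b hab =>
    Tuple.monotone_sort g (by simpa [σ] using Fin.rev_le_rev.mpr hab)
  have hsorted : ((List.ofFn g).mergeSort (fun a b => decide (a ≥ b))).Pairwise (· ≥ ·) :=
    (List.pairwise_mergeSort (le := fun a b : ℝ => decide (a ≥ b))
      (fun a b c h1 h2 => by simp_all; linarith) (fun a b => by simpa using le_total b a)
      (List.ofFn g)).imp (by simp)
  have : Std.Antisymm (α := ℝ) (· ≥ ·) := ⟨fun a b h1 h2 => le_antisymm h2 h1⟩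
  have hsort : (List.ofFn g).mergeSort (fun a b => decide (a ≥ b)) = List.ofFn (g ∘ σ) :=
    List.Perm.eq_of_pairwise' hsorted (List.pairwise_ofFn.mpr fun i j h => hanti h.le)
      ((List.mergeSort_perm _ _).trans (σ.ofFn_comp_perm g).symm)
  refine ⟨σ, hanti, fun i => ?_⟩
  rw [hsort, List.getD_eq_getElem _ _ (by simp), List.getElem_ofFn]
  rfl

lemma exists_threshold_of_antitone {m r : ℕ} {f : Fin m → ℝ} (hf : Antitone f) (hf0 : 0 ≤ f) :
    ∃ c, 0 ≤ c ∧ (∀ i : Fin m, (i : ℕ) < r → c ≤ f i) ∧ ∀ i : Fin m, r ≤ i → f i ≤ c := by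
  by_cases hr : r < m
  · exact ⟨f ⟨r, hr⟩, hf0 _, fun i hi => hf (Fin.mk_le_of_le_val hi.le),
      fun i hi => hf (Fin.le_def.mpr hi)⟩
  · exact ⟨0, le_rfl, fun i _ => hf0 i, fun i hi => absurd (hi.trans_lt i.isLt) hr⟩

lemma exists_finset_sum_sv_sq_eq {n m r : ℕ} (Y : Matrix (Fin n) (Fin m) ℝ) (hr : r ≤ m) :
    ∃ s : Finset (Fin m), #s = r ∧
      ∑ i ∈ Finset.range r, sv Y i ^ 2 =
        ∑ j ∈ s, (isHermitian_conjTranspose_mul_self Y).eigenvalues j ∧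
      ∃ c, 0 ≤ c ∧ (∀ j ∈ s, c ≤ (isHermitian_conjTranspose_mul_self Y).eigenvalues j) ∧
        ∀ j ∉ s, (isHermitian_conjTranspose_mul_self Y).eigenvalues j ≤ c := by
  set ev := (isHermitian_conjTranspose_mul_self Y).eigenvalues
  have hev : 0 ≤ ev := (posSemidef_conjTranspose_mul_self Y).eigenvalues_nonneg
  obtain ⟨σ, hanti, hsv⟩ := exists_perm_antitone_mergeSort (fun j => √(ev j))
  have hsv_sq (i : Fin m) : sv Y i ^ 2 = ev (σ i) := by
    rw [sv, hsv i, Real.sq_sqrt (hev _)]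
  have hanti' : Antitone (ev ∘ σ) := fun a b hab => by
    simpa [Real.sqrt_le_sqrt_iff (hev _)] using hanti hab
  obtain ⟨c, hc, hlt, hge⟩ := exists_threshold_of_antitone (r := r) hanti' fun j => hev (σ j)
  set s := (Finset.univ.map (Fin.castLEEmb hr)).map σ.toEmbedding
  have hmem (j : Fin m) : j ∈ s ↔ (σ.symm j : ℕ) < r := by
    rw [Finset.mem_map_equiv, Finset.mem_map]
    exact ⟨fun ⟨i, _, hi⟩ => hi ▸ i.isLt, fun h => ⟨⟨_, h⟩, Finset.mem_univ _, Fin.ext rfl⟩⟩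
  refine ⟨s, by simp [s], ?_, c, hc, fun j hj => ?_, fun j hj => ?_⟩
  · simp only [s, Finset.sum_range, Finset.sum_map]
    exact Finset.sum_congr rfl fun i _ => hsv_sq (Fin.castLE hr i)
  · simpa using hlt (σ.symm j) ((hmem j).mp hj)
  · simpa using hge (σ.symm j) (not_lt.mp (mt (hmem j).mpr hj))

section Conjugate

variable {n m : ℕ}

lemma fconj_fRank_eq_of_isGreatest {r : ℕ} {Y : Matrix (Fin n) (Fin m) ℝ} {v : ℝ}
    (hv : IsGreatest ((fun M => ip M Y - 2⁻¹ * fro M ^ 2) '' {M | M.rank ≤ r}) v) :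
    fconj (fRank r) Y = v := by
  obtain ⟨⟨M₀, hM₀, hv₀⟩, hle⟩ := hv
  refine le_antisymm (iSup_le fun M => ?_) (le_iSup_of_le M₀ ?_)
  · unfold fRank
    split_ifs with hM
    · exact EReal.coe_le_coe_iff.mpr (hle ⟨M, hM, rfl⟩)
    · simp
  · rw [fRank, if_pos (show M₀.rank ≤ r from hM₀), ← EReal.coe_sub]
    exact EReal.coe_le_coe_iff.mpr hv₀.ge

variable (Y : Matrix (Fin n) (Fin m) ℝ)

lemma transpose_mul_self_eq_conjTranspose_mul_self : Yᵀ * Y = Yᴴ * Y := by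
  rw [conjTranspose_eq_transpose_of_trivial]

lemma ip_sub_half_fro_sq_le_sum_eigenvalues {s : Finset (Fin m)} {c : ℝ} (hc : 0 ≤ c)
    (hs : ∀ j ∈ s, c ≤ (isHermitian_conjTranspose_mul_self Y).eigenvalues j)
    (hsc : ∀ j ∉ s, (isHermitian_conjTranspose_mul_self Y).eigenvalues j ≤ c)
    {M : Matrix (Fin n) (Fin m) ℝ} (hM : M.rank ≤ #s) :
    ip M Y - 2⁻¹ * fro M ^ 2 ≤
      2⁻¹ * ∑ j ∈ s, (isHermitian_conjTranspose_mul_self Y).eigenvalues j := by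
  obtain ⟨P, hP, hPP, hMP, hPtr⟩ := exists_isSymm_isIdempotentElem_mul_eq_self M
  have htr := (isHermitian_conjTranspose_mul_self Y).trace_mul_le_sum_eigenvalues hc hs hsc hP hPP
    (hPtr ▸ Nat.cast_le.mpr hM)
  have hip := ip_sub_half_fro_sq_le_trace hP hPP hMP Y
  rw [transpose_mul_self_eq_conjTranspose_mul_self] at hip
  linarith

lemma exists_rank_le_ip_sub_half_fro_sq_eq (s : Finset (Fin m)) :
    ∃ M : Matrix (Fin n) (Fin m) ℝ, M.rank ≤ #s ∧ ip M Y - 2⁻¹ * fro M ^ 2 =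
      2⁻¹ * ∑ j ∈ s, (isHermitian_conjTranspose_mul_self Y).eigenvalues j := by
  set hA := isHermitian_conjTranspose_mul_self Y
  set U : Matrix (Fin m) (Fin m) ℝ := (hA.eigenvectorUnitary : Matrix (Fin m) (Fin m) ℝ)
  have hU : Uᵀ * U = 1 := hA.transpose_eigenvectorUnitary_mul_self
  have htr : trace (orthProj U s * (Yᵀ * Y)) = ∑ j ∈ s, hA.eigenvalues j := by
    rw [transpose_mul_self_eq_conjTranspose_mul_self, hA.trace_mul_eq_sum_diag_mul_eigenvalues,
      transpose_mul_orthProj_mul hU]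
    simp [Finset.sum_ite_mem]
  refine ⟨Y * orthProj U s, (rank_mul_le_right _ _).trans (rank_orthProj_le U s), ?_⟩
  rw [ip_mul_self_right (orthProj_isSymm U s),
    fro_mul_sq (orthProj_isSymm U s) (isIdempotentElem_orthProj hU s), htr]
  ring

end Conjugate

theorem conjugate_fRank_eq_half_sq_truncFro_general {n m r : ℕ} (hr2 : r ≤ min n m)
    (Y : Matrix (Fin n) (Fin m) ℝ) :
    fconj (fRank r) Y = ((2⁻¹ * ∑ i ∈ Finset.range r, sv Y i ^ 2 : ℝ) : EReal) ∧
    fconj (fRank r) Y = ((2⁻¹ * truncFro r Y ^ 2 : ℝ) : EReal) := by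
  obtain ⟨s, rfl, hsv, c, hc, hs, hsc⟩ :=
    exists_finset_sum_sv_sq_eq Y (hr2.trans (min_le_right n m))
  have hconj : fconj (fRank #s) Y =
      ((2⁻¹ * ∑ j ∈ s, (isHermitian_conjTranspose_mul_self Y).eigenvalues j : ℝ) : EReal) :=
    fconj_fRank_eq_of_isGreatest ⟨exists_rank_le_ip_sub_half_fro_sq_eq Y s,
      fun _ ⟨_, hM, hv⟩ => hv ▸ ip_sub_half_fro_sq_le_sum_eigenvalues Y hc hs hsc hM⟩
  rw [truncFro, Real.sq_sqrt (Finset.sum_nonneg fun i _ => sq_nonneg _), hsv]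
  exact ⟨hconj, hconj⟩

/-- the Fenchel conjugate of `f(M) = ½‖M‖_F² + χ_{rank M ≤ r}(M)` is
`f*(Y) = ½ Σ_{i=1}^r σᵢ(Y)² = ½‖Y‖_{F,r}²`. -/
theorem conjugate_fRank_eq_half_sq_truncFro {n m r : ℕ} (hr1 : 1 ≤ r) (hr2 : r ≤ min n m)
    (Y : Matrix (Fin n) (Fin m) ℝ) :
    fconj (fRank r) Y = ((2⁻¹ * ∑ i ∈ Finset.range r, sv Y i ^ 2 : ℝ) : EReal) ∧
    fconj (fRank r) Y = ((2⁻¹ * truncFro r Y ^ 2 : ℝ) : EReal) :=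
  conjugate_fRank_eq_half_sq_truncFro_general hr2 Y
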